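/- arXiv:2005.04482 — 4 statements merged into one kernel-verified Lean document; each statement's English description precedes it below -/
import Mathlib

section
/- Let Ω ⊆ ℝ^n be open, let u, φ : ℝ^n → ℝ be smooth on Ω with φ > 0 on Ω, and suppose −Δφ = λφ on Ω. Then at every point of Ω: |Δu|² − λ² u² = |Δu + λ u|² + 2λ ( |∇u − (∇φ/φ) u|² + div( (∇φ/φ) u² − u ∇u ) ). -/
open MeasureTheory Finset
open scoped RealInnerProductSpace

noncomputable def grad {n : ℕ} (f : EuclideanSpace ℝ (Fin n) → ℝ) :
    EuclideanSpace ℝ (Fin n) → EuclideanSpace ℝ (Fin n) :=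
  fun x => gradient f x

noncomputable def dvg {n : ℕ} (V : EuclideanSpace ℝ (Fin n) → EuclideanSpace ℝ (Fin n)) :
    EuclideanSpace ℝ (Fin n) → ℝ :=
  fun x => ∑ i, fderiv ℝ V x (EuclideanSpace.single i 1) i

noncomputable def lap {n : ℕ} (f : EuclideanSpace ℝ (Fin n) → ℝ) :
    EuclideanSpace ℝ (Fin n) → ℝ :=
  dvg (grad f)

lemma grad_apply {n : ℕ} (f : EuclideanSpace ℝ (Fin n) → ℝ) (x : EuclideanSpace ℝ (Fin n))
    (i : Fin n) : grad f x i = fderiv ℝ f x (EuclideanSpace.single i 1) := by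
  have h1 : grad f x i = ⟪grad f x, EuclideanSpace.single i (1:ℝ)⟫ := by
    simp [EuclideanSpace.inner_single_right]
  rw [h1]
  simp only [grad, gradient]
  exact InnerProductSpace.toDual_symm_apply

lemma grad_contDiffAt {n : ℕ} {f : EuclideanSpace ℝ (Fin n) → ℝ} {x : EuclideanSpace ℝ (Fin n)}
    (hf : ContDiffAt ℝ (⊤ : ℕ∞) f x) : ContDiffAt ℝ (⊤ : ℕ∞) (grad f) x := by
  have : grad f = fun y =>
      (InnerProductSpace.toDual ℝ (EuclideanSpace ℝ (Fin n))).symm (fderiv ℝ f y) := rfl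
  rw [this]
  exact ((InnerProductSpace.toDual ℝ (EuclideanSpace ℝ (Fin n))).symm.contDiff.contDiffAt).comp x
    (hf.fderiv_right (by simp))

lemma dvg_term {n : ℕ} {V : EuclideanSpace ℝ (Fin n) → EuclideanSpace ℝ (Fin n)}
    {x : EuclideanSpace ℝ (Fin n)} (hV : DifferentiableAt ℝ V x) (i : Fin n) :
    fderiv ℝ V x (EuclideanSpace.single i 1) i
      = fderiv ℝ (fun y => V y i) x (EuclideanSpace.single i 1) := by
  have h : HasFDerivAt (fun y => V y i)
      ((EuclideanSpace.proj (𝕜 := ℝ) i).comp (fderiv ℝ V x)) x :=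
    (EuclideanSpace.proj (𝕜 := ℝ) i).hasFDerivAt.comp x hV.hasFDerivAt
  rw [h.fderiv]
  rfl

theorem stmt1 {n : ℕ} (Ω : Set (EuclideanSpace ℝ (Fin n))) (hΩ : IsOpen Ω)
    (u φ : EuclideanSpace ℝ (Fin n) → ℝ)
    (hu : ContDiffOn ℝ (⊤ : ℕ∞) u Ω) (hφ : ContDiffOn ℝ (⊤ : ℕ∞) φ Ω)
    (hφpos : ∀ x ∈ Ω, 0 < φ x) (lam : ℝ)
    (heig : ∀ x ∈ Ω, -(lap φ x) = lam * φ x) :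
    ∀ x ∈ Ω,
      (lap u x) ^ 2 - lam ^ 2 * (u x) ^ 2 =
        (lap u x + lam * u x) ^ 2 +
          2 * lam * (‖grad u x - (u x / φ x) • grad φ x‖ ^ 2 +
            dvg (fun y => ((u y) ^ 2 / φ y) • grad φ y - u y • grad u y) x) := by
  intro x hx
  have hxn : Ω ∈ nhds x := hΩ.mem_nhds hx
  have hux : ContDiffAt ℝ (⊤ : ℕ∞) u x := hu.contDiffAt hxn
  have hφx : ContDiffAt ℝ (⊤ : ℕ∞) φ x := hφ.contDiffAt hxn
  have hΦ : φ x ≠ 0 := (hφpos x hx).ne'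
  set e : Fin n → EuclideanSpace ℝ (Fin n) := fun i => EuclideanSpace.single i (1:ℝ) with he
  set p : Fin n → EuclideanSpace ℝ (Fin n) → ℝ := fun i y => fderiv ℝ u y (e i) with hp
  set q : Fin n → EuclideanSpace ℝ (Fin n) → ℝ := fun i y => fderiv ℝ φ y (e i) with hq
  have hpc : ∀ i, ContDiffAt ℝ (⊤ : ℕ∞) (p i) x := fun i =>
    (hux.fderiv_right (by simp)).clm_apply contDiffAt_const
  have hqc : ∀ i, ContDiffAt ℝ (⊤ : ℕ∞) (q i) x := fun i =>
    (hφx.fderiv_right (by simp)).clm_apply contDiffAt_const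
  have hud : HasFDerivAt u (fderiv ℝ u x) x :=
    (hux.differentiableAt (by simp)).hasFDerivAt
  have hφd : HasFDerivAt φ (fderiv ℝ φ x) x :=
    (hφx.differentiableAt (by simp)).hasFDerivAt
  have hpd : ∀ i, HasFDerivAt (p i) (fderiv ℝ (p i) x) x := fun i =>
    ((hpc i).differentiableAt (by simp)).hasFDerivAt
  have hqd : ∀ i, HasFDerivAt (q i) (fderiv ℝ (q i) x) x := fun i =>
    ((hqc i).differentiableAt (by simp)).hasFDerivAt
  have hgu : DifferentiableAt ℝ (grad u) x :=
    (grad_contDiffAt hux).differentiableAt (by simp)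
  have hgφ : DifferentiableAt ℝ (grad φ) x :=
    (grad_contDiffAt hφx).differentiableAt (by simp)
  set U := u x with hU
  set Φ := φ x with hΦdef
  set P : Fin n → ℝ := fun i => p i x with hP
  set Q : Fin n → ℝ := fun i => q i x with hQ
  set A : Fin n → ℝ := fun i => fderiv ℝ (p i) x (e i) with hA
  set B : Fin n → ℝ := fun i => fderiv ℝ (q i) x (e i) with hB
  -- Laplacians as sums of second partials
  have lap_eq : ∀ (f : EuclideanSpace ℝ (Fin n) → ℝ), ContDiffAt ℝ (⊤ : ℕ∞) f x →
      lap f x = ∑ i, fderiv ℝ (fun y => fderiv ℝ f y (e i)) x (e i) := by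
    intro f hf
    have hgf : DifferentiableAt ℝ (grad f) x := (grad_contDiffAt hf).differentiableAt (by simp)
    simp only [lap, dvg]
    refine Finset.sum_congr rfl fun i _ => ?_
    rw [dvg_term hgf i,
      show (fun y => grad f y i) = (fun y => fderiv ℝ f y (e i)) from
        funext fun y => grad_apply f y i]
  have hlapu : lap u x = ∑ i, A i := lap_eq u hux
  have hlapφ : lap φ x = ∑ i, B i := lap_eq φ hφx
  have hBsum : ∑ i, B i = -(lam * Φ) := by
    rw [← hlapφ]; have := heig x hx; linarith
  -- norm term
  have hnorm : ‖grad u x - (U / Φ) • grad φ x‖ ^ 2 = ∑ i, (P i - U / Φ * Q i) ^ 2 := by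
    rw [← real_inner_self_eq_norm_sq]
    rw [PiLp.inner_apply]
    refine Finset.sum_congr rfl fun i _ => ?_
    simp only [PiLp.sub_apply, PiLp.smul_apply, smul_eq_mul, RCLike.inner_apply, conj_trivial]
    rw [grad_apply, grad_apply]
    ring
  -- divergence term
  set V : EuclideanSpace ℝ (Fin n) → EuclideanSpace ℝ (Fin n) :=
    fun y => ((u y) ^ 2 / φ y) • grad φ y - u y • grad u y with hV
  have h1 : DifferentiableAt ℝ (fun y => (u y) ^ 2 / φ y) x :=
    by
      have hinv : DifferentiableAt ℝ (fun y => (φ y)⁻¹) x :=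
        (hφx.differentiableAt (by simp)).inv hΦ
      have h3 : DifferentiableAt ℝ (fun y => u y * u y * (φ y)⁻¹) x :=
        (hud.mul hud).differentiableAt.mul hinv
      simpa [pow_two, div_eq_mul_inv] using h3
  have hVd : DifferentiableAt ℝ V x :=
    (h1.smul hgφ).sub ((hux.differentiableAt (by simp)).smul hgu)
  have hVcomp : ∀ i, (fun y => V y i) = fun y => u y * u y * (φ y)⁻¹ * q i y - u y * p i y := by
    intro i
    funext y
    simp only [hV, PiLp.sub_apply, PiLp.smul_apply, smul_eq_mul]
    rw [grad_apply, grad_apply]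
    rw [pow_two, div_eq_mul_inv]
  have key : ∀ i, fderiv ℝ (fun y => V y i) x (e i)
      = ((2 * U * P i * Φ - U ^ 2 * Q i) / Φ ^ 2) * Q i + (U ^ 2 / Φ) * B i
        - (P i * P i + U * A i) := by
    intro i
    rw [hVcomp i]
    have hinv : HasFDerivAt (fun y => (φ y)⁻¹)
        ((-(ContinuousLinearMap.mulLeftRight ℝ ℝ Φ⁻¹ Φ⁻¹)).comp (fderiv ℝ φ x)) x :=
      (hasFDerivAt_inv' hΦ).comp x hφd
    have H := (((hud.mul hud).mul hinv).mul (hqd i)).sub (hud.mul (hpd i))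
    rw [HasFDerivAt.fderiv (f := fun y => u y * u y * (φ y)⁻¹ * q i y - u y * p i y) H]
    simp only [ContinuousLinearMap.coe_sub', Pi.sub_apply, ContinuousLinearMap.add_apply,
      ContinuousLinearMap.coe_smul', Pi.smul_apply, smul_eq_mul,
      ContinuousLinearMap.smul_apply, ContinuousLinearMap.coe_comp', Function.comp_apply,
      ContinuousLinearMap.neg_apply, ContinuousLinearMap.mulLeftRight_apply, Pi.mul_apply]
    have h1 : fderiv ℝ u x (e i) = P i := rfl
    have h2 : fderiv ℝ φ x (e i) = Q i := rfl
    rw [h1, h2]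
    have h3 : u x = U := rfl
    have h4 : φ x = Φ := rfl
    have h5 : q i x = Q i := rfl
    have h6 : p i x = P i := rfl
    have h7 : fderiv ℝ (p i) x (e i) = A i := rfl
    have h8 : fderiv ℝ (q i) x (e i) = B i := rfl
    simp only [h3, h4, h5, h6, h7, h8]
    field_simp
    ring
  have hdvg : dvg V x = ∑ i, (((2 * U * P i * Φ - U ^ 2 * Q i) / Φ ^ 2) * Q i
      + (U ^ 2 / Φ) * B i - (P i * P i + U * A i)) := by
    simp only [dvg]
    refine Finset.sum_congr rfl fun i _ => ?_
    rw [dvg_term hVd i, key i]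
  -- combine
  have hcomb : (∑ i, (P i - U / Φ * Q i) ^ 2) +
      (∑ i, (((2 * U * P i * Φ - U ^ 2 * Q i) / Φ ^ 2) * Q i
        + (U ^ 2 / Φ) * B i - (P i * P i + U * A i)))
      = U ^ 2 / Φ * (∑ i, B i) - U * (∑ i, A i) := by
    rw [← Finset.sum_add_distrib, Finset.mul_sum, Finset.mul_sum, ← Finset.sum_sub_distrib]
    refine Finset.sum_congr rfl fun i _ => ?_
    field_simp
    ring
  rw [hlapu, hnorm, hdvg, hcomb, hBsum]
  field_simp
  ring
end

section
/- Let Ω ⊆ ℝ^n be open, let u, φ be smooth on Ω with φ > 0, and −Δφ = λφ on Ω. Then for every positive integer m, pointwise on Ω: |Δ^m u|² − λ^{2m} u² = Σ_{j=0}^{m−1} λ^{2(m−1−j)} ( |Δ^{j+1}u + λ Δ^j u|² + 2λ |∇Δ^j u − (∇φ/φ) Δ^j u|² ) + Σ_{j=0}^{m−1} 2 λ^{2(m−1−j)+1} div( (∇φ/φ)(Δ^j u)² − (Δ^j u) ∇Δ^j u ). -/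
open MeasureTheory Finset
open scoped RealInnerProductSpace

section Aux

variable {n : ℕ}
local notation "E" => EuclideanSpace ℝ (Fin n)

lemma inner_grad_eq (f : E → ℝ) (x v : E) : ⟪grad f x, v⟫ = fderiv ℝ f x v := by
  simp [grad, gradient, InnerProductSpace.toDual_symm_apply]

lemma clm_sum_basis (L : E →L[ℝ] ℝ) (w : E) :
    ∑ i, L (EuclideanSpace.single i 1) * w i = L w := by
  have hw : ∑ i, w i • EuclideanSpace.single (𝕜 := ℝ) i (1:ℝ) = w := by
    have := (EuclideanSpace.basisFun (Fin n) ℝ).sum_repr w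
    simpa [EuclideanSpace.basisFun_repr, EuclideanSpace.basisFun_apply] using this
  calc ∑ i, L (EuclideanSpace.single i 1) * w i
      = ∑ i, L (w i • EuclideanSpace.single i 1) := by simp [mul_comm]
    _ = L w := by rw [← map_sum, hw]

lemma contDiffOn_grad {f : E → ℝ} {Ω : Set E} (hΩ : IsOpen Ω) (hf : ContDiffOn ℝ (⊤ : ℕ∞) f Ω) :
    ContDiffOn ℝ (⊤ : ℕ∞) (grad f) Ω := by
  have h1 : ContDiffOn ℝ (⊤ : ℕ∞) (fderiv ℝ f) Ω := hf.fderiv_of_isOpen hΩ (by simp)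
  have h2 : ContDiff ℝ (⊤ : ℕ∞) (fun L : E →L[ℝ] ℝ => (InnerProductSpace.toDual ℝ E).symm L) :=
    (InnerProductSpace.toDual ℝ E).symm.toContinuousLinearEquiv.toContinuousLinearMap.contDiff
  exact h2.comp_contDiffOn h1

lemma contDiffOn_dvg {V : E → E} {Ω : Set E} (hΩ : IsOpen Ω) (hV : ContDiffOn ℝ (⊤ : ℕ∞) V Ω) :
    ContDiffOn ℝ (⊤ : ℕ∞) (dvg V) Ω := by
  have h1 : ContDiffOn ℝ (⊤ : ℕ∞) (fderiv ℝ V) Ω := hV.fderiv_of_isOpen hΩ (by simp)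
  apply ContDiffOn.sum
  intro i _
  have h2 : ContDiff ℝ (⊤ : ℕ∞) (fun L : E →L[ℝ] E =>
      (EuclideanSpace.proj i : EuclideanSpace ℝ (Fin n) →L[ℝ] ℝ) (L (EuclideanSpace.single i 1))) :=
    ((EuclideanSpace.proj i : EuclideanSpace ℝ (Fin n) →L[ℝ] ℝ).comp
      ((ContinuousLinearMap.apply ℝ (EuclideanSpace ℝ (Fin n)))
        (EuclideanSpace.single i (1:ℝ)))).contDiff
  exact h2.comp_contDiffOn h1

lemma contDiffOn_lap {f : E → ℝ} {Ω : Set E} (hΩ : IsOpen Ω) (hf : ContDiffOn ℝ (⊤ : ℕ∞) f Ω) :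
    ContDiffOn ℝ (⊤ : ℕ∞) (lap f) Ω :=
  contDiffOn_dvg hΩ (contDiffOn_grad hΩ hf)

lemma dvg_sub {V W : E → E} {x : E} (hV : DifferentiableAt ℝ V x) (hW : DifferentiableAt ℝ W x) :
    dvg (fun y => V y - W y) x = dvg V x - dvg W x := by
  unfold dvg
  rw [fderiv_fun_sub hV hW, ← Finset.sum_sub_distrib]
  simp

lemma dvg_smul {c : E → ℝ} {W : E → E} {x : E} (hc : DifferentiableAt ℝ c x)
    (hW : DifferentiableAt ℝ W x) :
    dvg (fun y => c y • W y) x = fderiv ℝ c x (W x) + c x * dvg W x := by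
  unfold dvg
  rw [fderiv_fun_smul hc hW]
  simp only [ContinuousLinearMap.add_apply, ContinuousLinearMap.smul_apply,
    ContinuousLinearMap.smulRight_apply, PiLp.add_apply, PiLp.smul_apply, smul_eq_mul]
  rw [Finset.sum_add_distrib, Finset.mul_sum, ← clm_sum_basis (fderiv ℝ c x) (W x)]
  ring

lemma hasFDerivAt_quot {x : E} {c d : E → ℝ} {c' d' : E →L[ℝ] ℝ}
    (hc : HasFDerivAt c c' x) (hd : HasFDerivAt d d' x) (hx : d x ≠ 0) :
    HasFDerivAt (fun y => c y / d y) ((d x)⁻¹ • c' - (c x / d x ^ 2) • d') x := by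
  have hinv : HasFDerivAt (fun y => (d y)⁻¹) ((-(d x ^ 2)⁻¹) • d') x := by
    have h := (hasFDerivAt_inv' (𝕜 := ℝ) hx).comp x hd
    refine h.congr_fderiv ?_
    ext v
    simp only [ContinuousLinearMap.smul_apply, ContinuousLinearMap.comp_apply,
      ContinuousLinearMap.neg_apply, ContinuousLinearMap.mulLeftRight_apply, smul_eq_mul]
    ring
  have h2 := hc.mul hinv
  have he : (fun y => c y / d y) = fun y => c y * (d y)⁻¹ := by
    funext y; rw [div_eq_mul_inv]
  rw [he]
  refine h2.congr_fderiv ?_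
  ext v
  simp
  ring

lemma key {Ω : Set E} (hΩ : IsOpen Ω) {f φ : E → ℝ}
    (hf : ContDiffOn ℝ (⊤ : ℕ∞) f Ω) (hφ : ContDiffOn ℝ (⊤ : ℕ∞) φ Ω) {x : E} (hx : x ∈ Ω)
    (hb : φ x ≠ 0) (lam : ℝ) (heig : lap φ x = -(lam * φ x)) :
    (lap f x + lam * f x) ^ 2 + 2 * lam * ‖grad f x - (f x / φ x) • grad φ x‖ ^ 2
      + 2 * lam * dvg (fun y => (f y ^ 2 / φ y) • grad φ y - f y • grad f y) x
    = (lap f x) ^ 2 - lam ^ 2 * (f x) ^ 2 := by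
  have hmem : Ω ∈ nhds x := hΩ.mem_nhds hx
  have hdf : DifferentiableAt ℝ f x :=
    ((hf x hx).differentiableWithinAt (by simp)).differentiableAt hmem
  have hdφ : DifferentiableAt ℝ φ x :=
    ((hφ x hx).differentiableWithinAt (by simp)).differentiableAt hmem
  have hGf : DifferentiableAt ℝ (grad f) x :=
    (((contDiffOn_grad hΩ hf) x hx).differentiableWithinAt (by simp)).differentiableAt hmem
  have hGφ : DifferentiableAt ℝ (grad φ) x :=
    (((contDiffOn_grad hΩ hφ) x hx).differentiableWithinAt (by simp)).differentiableAt hmem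
  have hc2 : HasFDerivAt (fun y => f y * f y)
      (f x • fderiv ℝ f x + f x • fderiv ℝ f x) x := hdf.hasFDerivAt.mul hdf.hasFDerivAt
  have hq : HasFDerivAt (fun y => f y ^ 2 / φ y)
      ((φ x)⁻¹ • (f x • fderiv ℝ f x + f x • fderiv ℝ f x)
        - (f x ^ 2 / φ x ^ 2) • fderiv ℝ φ x) x := by
    have h := hasFDerivAt_quot hc2 hdφ.hasFDerivAt hb
    have he : (fun y => f y ^ 2 / φ y) = fun y => (f y * f y) / φ y := by
      funext y; rw [pow_two]
    rw [he, pow_two]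
    exact h
  have hdvg := dvg_sub (hq.differentiableAt.fun_smul hGφ) (hdf.fun_smul hGf)
  rw [hdvg, dvg_smul hq.differentiableAt hGφ, dvg_smul hdf hGf, hq.fderiv]
  have hlapφ : dvg (grad φ) x = lap φ x := rfl
  have hlapf : dvg (grad f) x = lap f x := rfl
  rw [hlapφ, hlapf, heig]
  simp only [ContinuousLinearMap.sub_apply, ContinuousLinearMap.add_apply,
    ContinuousLinearMap.smul_apply, smul_eq_mul]
  rw [← inner_grad_eq f x (grad φ x), ← inner_grad_eq φ x (grad φ x),
    ← inner_grad_eq f x (grad f x)]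
  rw [norm_sub_sq_real, real_inner_smul_right, norm_smul]
  rw [real_inner_self_eq_norm_sq (grad φ x), real_inner_self_eq_norm_sq (grad f x),
    Real.norm_eq_abs, mul_pow, sq_abs]
  field_simp
  ring

end Aux

theorem stmt2 {n : ℕ} (Ω : Set (EuclideanSpace ℝ (Fin n))) (hΩ : IsOpen Ω)
    (u φ : EuclideanSpace ℝ (Fin n) → ℝ)
    (hu : ContDiffOn ℝ (⊤ : ℕ∞) u Ω) (hφ : ContDiffOn ℝ (⊤ : ℕ∞) φ Ω)
    (hφpos : ∀ x ∈ Ω, 0 < φ x) (lam : ℝ)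
    (heig : ∀ x ∈ Ω, -(lap φ x) = lam * φ x)
    (m : ℕ) (hm : 1 ≤ m) :
    ∀ x ∈ Ω,
      (lap^[m] u x) ^ 2 - lam ^ (2 * m) * (u x) ^ 2 =
        (∑ j ∈ Finset.range m, lam ^ (2 * (m - 1 - j)) *
          ((lap^[j + 1] u x + lam * lap^[j] u x) ^ 2 +
            2 * lam * ‖grad (lap^[j] u) x - (lap^[j] u x / φ x) • grad φ x‖ ^ 2)) +
        (∑ j ∈ Finset.range m, 2 * lam ^ (2 * (m - 1 - j) + 1) *
          dvg (fun y => ((lap^[j] u y) ^ 2 / φ y) • grad φ y -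
            lap^[j] u y • grad (lap^[j] u) y) x) := by
  intro x hx
  have hb : φ x ≠ 0 := (hφpos x hx).ne'
  have heig' : lap φ x = -(lam * φ x) := by linarith [heig x hx]
  have hiter : ∀ j, ContDiffOn ℝ (⊤ : ℕ∞) (lap^[j] u) Ω := by
    intro j
    induction j with
    | zero => simpa using hu
    | succ j ih =>
      rw [Function.iterate_succ_apply']
      exact contDiffOn_lap hΩ ih
  set T : ℕ → ℝ := fun j => lam ^ (2 * (m - j)) * (lap^[j] u x) ^ 2 with hT
  rw [← Finset.sum_add_distrib]
  have hterm : ∀ j ∈ Finset.range m,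
      (lam ^ (2 * (m - 1 - j)) *
          ((lap^[j + 1] u x + lam * lap^[j] u x) ^ 2 +
            2 * lam * ‖grad (lap^[j] u) x - (lap^[j] u x / φ x) • grad φ x‖ ^ 2) +
        2 * lam ^ (2 * (m - 1 - j) + 1) *
          dvg (fun y => ((lap^[j] u y) ^ 2 / φ y) • grad φ y -
            lap^[j] u y • grad (lap^[j] u) y) x)
      = T (j + 1) - T j := by
    intro j hj
    have hjm : j < m := Finset.mem_range.mp hj
    have hk := key hΩ (hiter j) hφ hx hb lam heig'
    have hsucc : lap^[j + 1] u x = lap (lap^[j] u) x := by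
      rw [Function.iterate_succ_apply']
    have e1 : m - 1 - j = m - (j + 1) := by omega
    have e2 : 2 * (m - j) = 2 * (m - 1 - j) + 2 := by omega
    rw [hT]
    simp only [e1.symm, e2]
    rw [hsucc]
    calc lam ^ (2 * (m - 1 - j)) *
          ((lap (lap^[j] u) x + lam * lap^[j] u x) ^ 2 +
            2 * lam * ‖grad (lap^[j] u) x - (lap^[j] u x / φ x) • grad φ x‖ ^ 2) +
        2 * lam ^ (2 * (m - 1 - j) + 1) *
          dvg (fun y => ((lap^[j] u y) ^ 2 / φ y) • grad φ y -
            lap^[j] u y • grad (lap^[j] u) y) x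
        = lam ^ (2 * (m - 1 - j)) *
          ((lap (lap^[j] u) x + lam * lap^[j] u x) ^ 2 +
            2 * lam * ‖grad (lap^[j] u) x - (lap^[j] u x / φ x) • grad φ x‖ ^ 2 +
            2 * lam * dvg (fun y => ((lap^[j] u y) ^ 2 / φ y) • grad φ y -
              lap^[j] u y • grad (lap^[j] u) y) x) := by
          rw [pow_succ]; ring
      _ = lam ^ (2 * (m - 1 - j)) * ((lap (lap^[j] u) x) ^ 2 - lam ^ 2 * (lap^[j] u x) ^ 2) := by
          rw [hk]
      _ = lam ^ (2 * (m - 1 - j)) * (lap (lap^[j] u) x) ^ 2 -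
            lam ^ (2 * (m - 1 - j) + 2) * (lap^[j] u x) ^ 2 := by
          rw [pow_add]; ring
  rw [Finset.sum_congr rfl hterm, Finset.sum_range_sub T]
  rw [hT]
  simp only [Nat.sub_self, Nat.sub_zero, mul_zero, pow_zero, one_mul]
  rw [Function.iterate_zero_apply]
end

section
/- Let Ω ⊆ ℝ^n be open and let u, φ be C² on Ω with φ > 0. Then pointwise on Ω: |∇u|⁴ + (Δφ/φ + 4) u⁴ = ( |∇u|² − 2u² )² + |∇(u²) − (∇φ/φ) u²|² + div((∇φ/φ) u⁴). -/
open MeasureTheory Finset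
open scoped RealInnerProductSpace

section Gradient

variable {F : Type*} [NormedAddCommGroup F] [InnerProductSpace ℝ F] [CompleteSpace F]
  {f g : F → ℝ} {f' g' x : F}

theorem HasDerivAt.comp_hasGradientAt {h : ℝ → ℝ} {h' : ℝ} (hh : HasDerivAt h h' (f x))
    (hf : HasGradientAt f f' x) : HasGradientAt (fun y => h (f y)) (h' • f') x := by
  rw [hasGradientAt_iff_hasFDerivAt] at hf ⊢
  refine (hh.comp_hasFDerivAt x hf).congr_fderiv ?_
  ext v
  simp

theorem HasGradientAt.mul (hf : HasGradientAt f f' x) (hg : HasGradientAt g g' x) :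
    HasGradientAt (fun y => f y * g y) (f x • g' + g x • f') x := by
  rw [hasGradientAt_iff_hasFDerivAt] at hf hg ⊢
  refine (hf.mul hg).congr_fderiv ?_
  ext v
  simp

end Gradient

section Euclidean

variable {n : ℕ}

theorem EuclideanSpace.dual_apply_eq_sum (L : EuclideanSpace ℝ (Fin n) →L[ℝ] ℝ)
    (w : EuclideanSpace ℝ (Fin n)) : L w = ∑ i, L (EuclideanSpace.single i 1) * w i := by
  conv_lhs => rw [← (EuclideanSpace.basisFun (Fin n) ℝ).sum_repr w]
  simp [mul_comm]

theorem HasGradientAt.grad_eq {f : EuclideanSpace ℝ (Fin n) → ℝ} {f' x : EuclideanSpace ℝ (Fin n)}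
    (h : HasGradientAt f f' x) : grad f x = f' :=
  h.gradient

theorem dvg_smul_s8 {f : EuclideanSpace ℝ (Fin n) → ℝ}
    {V : EuclideanSpace ℝ (Fin n) → EuclideanSpace ℝ (Fin n)} {x : EuclideanSpace ℝ (Fin n)}
    (hf : DifferentiableAt ℝ f x) (hV : DifferentiableAt ℝ V x) :
    dvg (fun y => f y • V y) x = f x * dvg V x + ⟪grad f x, V x⟫ := by
  simp only [dvg, grad, fderiv_fun_smul hf hV, inner_gradient_left,
    EuclideanSpace.dual_apply_eq_sum (fderiv ℝ f x) (V x)]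
  simp [Finset.mul_sum, Finset.sum_add_distrib]

theorem differentiableAt_grad {f : EuclideanSpace ℝ (Fin n) → ℝ} {x : EuclideanSpace ℝ (Fin n)}
    (hf : ContDiffAt ℝ 2 f x) : DifferentiableAt ℝ (grad f) x := by
  have : DifferentiableAt ℝ (fderiv ℝ f) x :=
    (hf.fderiv_right (m := 1) (by norm_num)).differentiableAt one_ne_zero
  exact (InnerProductSpace.toDual ℝ _).symm.differentiableAt.comp x this

end Euclidean

-- `G, P, a, p, L` stand for `∇u, ∇φ, u, φ, Δφ` at a point.
theorem friedrichs_identity {E : Type*} [NormedAddCommGroup E] [InnerProductSpace ℝ E]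
    (G P : E) {a p : ℝ} (L : ℝ) (hp : p ≠ 0) :
    ‖G‖ ^ 4 + (L / p + 4) * a ^ 4 =
      (‖G‖ ^ 2 - 2 * a ^ 2) ^ 2 + ‖(2 * a) • G - (a ^ 2 / p) • P‖ ^ 2 +
        (a ^ 4 / p * L + ⟪(4 * a ^ 3 / p) • G - (a ^ 4 / p ^ 2) • P, P⟫) := by
  rw [norm_sub_sq_real, norm_smul, norm_smul, inner_sub_left, real_inner_smul_left,
    real_inner_smul_left, real_inner_smul_left, real_inner_smul_right, real_inner_self_eq_norm_sq]
  simp only [Real.norm_eq_abs, mul_pow, sq_abs]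
  field_simp
  ring

theorem stmt8 {n : ℕ} (Ω : Set (EuclideanSpace ℝ (Fin n))) (hΩ : IsOpen Ω)
    (u φ : EuclideanSpace ℝ (Fin n) → ℝ)
    (hu : ContDiffOn ℝ 2 u Ω) (hφ : ContDiffOn ℝ 2 φ Ω)
    (hφpos : ∀ x ∈ Ω, 0 < φ x) :
    ∀ x ∈ Ω,
      ‖grad u x‖ ^ 4 + (lap φ x / φ x + 4) * (u x) ^ 4 =
        (‖grad u x‖ ^ 2 - 2 * (u x) ^ 2) ^ 2 +
        ‖grad (fun y => (u y) ^ 2) x - ((u x) ^ 2 / φ x) • grad φ x‖ ^ 2 +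
        dvg (fun y => ((u y) ^ 4 / φ y) • grad φ y) x := by
  intro x hx
  have hux : ContDiffAt ℝ 2 u x := hu.contDiffAt (hΩ.mem_nhds hx)
  have hφx : ContDiffAt ℝ 2 φ x := hφ.contDiffAt (hΩ.mem_nhds hx)
  have hp : φ x ≠ 0 := (hφpos x hx).ne'
  have hu' : HasGradientAt u (grad u x) x := (hux.differentiableAt two_ne_zero).hasGradientAt
  have hφ' : HasGradientAt φ (grad φ x) x := (hφx.differentiableAt two_ne_zero).hasGradientAt
  have hsq : HasGradientAt (fun y => u y ^ 2) ((2 * u x) • grad u x) x := by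
    simpa using (hasDerivAt_pow 2 (u x)).comp_hasGradientAt hu'
  have hquot : HasGradientAt (fun y => u y ^ 4 / φ y)
      ((4 * u x ^ 3 / φ x) • grad u x - (u x ^ 4 / φ x ^ 2) • grad φ x) x := by
    have h := ((hasDerivAt_pow 4 (u x)).comp_hasGradientAt hu').mul
      ((hasDerivAt_inv hp).comp_hasGradientAt hφ')
    simp only [← div_eq_mul_inv] at h
    convert h using 1
    module
  rw [lap, dvg_smul_s8 hquot.differentiableAt (differentiableAt_grad hφx),
    hsq.grad_eq, hquot.grad_eq]
  exact friedrichs_identity _ _ _ hp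
end

section
/- Let Ω ⊆ ℝ^n be open, m a positive integer, and let u, φ be C² on Ω with φ > 0. Define p_j = 2^j and σ_m = (1/4) Σ_{j=1}^{m−1} 4^{p_j}. Then pointwise on Ω: |∇u|^{p_m} + (Δφ/φ + σ_m) u^{p_m} = Σ_{j=1}^{m−1} ( |∇(u^{p_{m−j−1}})|^{p_j} − 2^{p_j − 1} u^{p_{m−1}} )² + |∇(u^{p_{m−1}}) − (∇φ/φ) u^{p_{m−1}}|² + div((∇φ/φ) u^{p_m}). -/
/-!
For `m = 1` the identity `|∇u|² + (Δφ/φ) u² = |∇u - (u/φ) ∇φ|² + div ((u²/φ) ∇φ)` follows from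
the product rule for the divergence and expanding the square. Applied to `u²` instead of `u`,
the identity for the exponent `2 ^ m` involves `|∇(u²)| ^ 2 ^ m = 2 ^ 2 ^ m u ^ 2 ^ m |∇u| ^ 2 ^ m`,
and completing the square `(|∇u| ^ 2 ^ m - 2 ^ (2 ^ m - 1) u ^ 2 ^ m)²` turns it into the identity
for the exponent `2 ^ (m + 1)`: the term `4 ^ 2 ^ m / 4` added to `σ` is exactly `(2 ^ (2 ^ m - 1))²`.
-/

open MeasureTheory Finset
open scoped RealInnerProductSpace

section Friedrichs

variable {n : ℕ} {f u φ : EuclideanSpace ℝ (Fin n) → ℝ} {x : EuclideanSpace ℝ (Fin n)}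

lemma inner_grad (v : EuclideanSpace ℝ (Fin n)) :
    ⟪grad f x, v⟫ = fderiv ℝ f x v := by
  simp [grad, gradient, InnerProductSpace.toDual_symm_apply]

lemma dvg_fun_smul {V : EuclideanSpace ℝ (Fin n) → EuclideanSpace ℝ (Fin n)}
    (hf : DifferentiableAt ℝ f x) (hV : DifferentiableAt ℝ V x) :
    dvg (fun y => f y • V y) x = fderiv ℝ f x (V x) + f x * dvg V x := by
  have hsum : ∑ i, fderiv ℝ f x (EuclideanSpace.single i 1) * V x i = fderiv ℝ f x (V x) := by
    conv_rhs => rw [← (EuclideanSpace.basisFun (Fin n) ℝ).sum_repr (V x)]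
    simp [map_sum, mul_comm]
  simp only [dvg, fderiv_fun_smul hf hV, add_apply,
    smul_apply, ContinuousLinearMap.smulRight_apply, PiLp.add_apply,
    PiLp.smul_apply, smul_eq_mul, sum_add_distrib, ← mul_sum, hsum]
  ring

lemma grad_fun_sq (hu : DifferentiableAt ℝ u x) :
    grad (fun y => u y ^ 2) x = (2 * u x) • grad u x := by
  simp only [grad, gradient, fderiv_fun_pow 2 hu]
  simp [map_smul]

lemma ContDiffAt.differentiableAt_grad (hφ : ContDiffAt ℝ 2 φ x) :
    DifferentiableAt ℝ (grad φ) x :=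
  (InnerProductSpace.toDual ℝ (EuclideanSpace ℝ (Fin n))).symm.toContinuousLinearEquiv
    |>.differentiableAt.comp x ((hφ.fderiv_right (m := 1) le_rfl).differentiableAt one_ne_zero)

lemma friedrichs_sq (hu : DifferentiableAt ℝ u x) (hφ : DifferentiableAt ℝ φ x)
    (hgφ : DifferentiableAt ℝ (grad φ) x) (hφx : φ x ≠ 0) :
    ‖grad u x‖ ^ 2 + (lap φ x / φ x) * u x ^ 2
      = ‖grad u x - (u x / φ x) • grad φ x‖ ^ 2
        + dvg (fun y => (u y ^ 2 / φ y) • grad φ y) x := by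
  have hinv : HasFDerivAt (fun y => (φ y)⁻¹) (-(φ x ^ 2)⁻¹ • fderiv ℝ φ x) x :=
    (hasDerivAt_inv hφx).comp_hasFDerivAt x hφ.hasFDerivAt
  have hq : HasFDerivAt (fun y => u y ^ 2 / φ y)
      ((2 * u x / φ x) • fderiv ℝ u x - (u x ^ 2 / φ x ^ 2) • fderiv ℝ φ x) x := by
    simp only [div_eq_mul_inv]
    refine ((hu.hasFDerivAt.pow 2).mul hinv).congr_fderiv ?_
    ext v
    simp
    ring
  rw [dvg_fun_smul hq.differentiableAt hgφ, hq.fderiv, norm_sub_sq_real]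
  simp only [lap, sub_apply, smul_apply, smul_eq_mul, ← inner_grad, real_inner_smul_right,
    real_inner_self_eq_norm_sq, norm_smul, norm_div, Real.norm_eq_abs, mul_pow, div_pow, sq_abs]
  field_simp
  ring

lemma norm_grad_fun_sq_pow (hu : DifferentiableAt ℝ u x) {p : ℕ} (hp : Even p) :
    ‖grad (fun y => u y ^ 2) x‖ ^ p = 2 ^ p * u x ^ p * ‖grad u x‖ ^ p := by
  rw [grad_fun_sq hu, norm_smul, Real.norm_eq_abs, mul_pow, hp.pow_abs, mul_pow]

lemma friedrichs_two_pow_succ (hφ : DifferentiableAt ℝ φ x)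
    (hgφ : DifferentiableAt ℝ (grad φ) x) (hφx : φ x ≠ 0) (k : ℕ)
    (hu : DifferentiableAt ℝ u x) :
    ‖grad u x‖ ^ 2 ^ (k + 1) +
        (lap φ x / φ x + (1 / 4) * ∑ j ∈ Icc 1 k, (4 : ℝ) ^ 2 ^ j) * u x ^ 2 ^ (k + 1) =
      (∑ j ∈ Icc 1 k,
        (‖grad (fun y => u y ^ 2 ^ (k - j)) x‖ ^ 2 ^ j - 2 ^ (2 ^ j - 1) * u x ^ 2 ^ k) ^ 2) +
      ‖grad (fun y => u y ^ 2 ^ k) x - (u x ^ 2 ^ k / φ x) • grad φ x‖ ^ 2 +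
      dvg (fun y => (u y ^ 2 ^ (k + 1) / φ y) • grad φ y) x := by
  induction k generalizing u with
  | zero => simpa using friedrichs_sq hu hφ hgφ hφx
  | succ k ih =>
    have ih_sq := ih (u := fun y => u y ^ 2) (hu.pow 2)
    have hpow : ∀ (a : ℝ) (i : ℕ), (a ^ 2) ^ 2 ^ i = a ^ 2 ^ (i + 1) := fun a i => by
      rw [← pow_mul, pow_succ']
    have hsum : ∀ j ∈ Icc 1 k,
        (‖grad (fun y => u y ^ 2 ^ (k - j + 1)) x‖ ^ 2 ^ j - 2 ^ (2 ^ j - 1) * u x ^ 2 ^ (k + 1)) ^ 2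
          = (‖grad (fun y => u y ^ 2 ^ (k + 1 - j)) x‖ ^ 2 ^ j
              - 2 ^ (2 ^ j - 1) * u x ^ 2 ^ (k + 1)) ^ 2 := fun j hj => by
      rw [Nat.sub_add_comm (mem_Icc.mp hj).2]
    simp only [hpow, sum_congr rfl hsum,
      norm_grad_fun_sq_pow hu (p := 2 ^ (k + 1)) (Nat.even_pow.mpr ⟨even_two, k.succ_ne_zero⟩)] at ih_sq
    rw [sum_Icc_succ_top (Nat.le_add_left 1 k), sum_Icc_succ_top (Nat.le_add_left 1 k),
      Nat.sub_self, pow_zero]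
    simp only [pow_one]
    set c : ℝ := 2 ^ (2 ^ (k + 1) - 1)
    have hc : (2 : ℝ) ^ 2 ^ (k + 1) = 2 * c := by
      rw [← pow_succ', Nat.sub_add_cancel Nat.one_le_two_pow]
    have h4 : (4 : ℝ) ^ 2 ^ (k + 1) = 4 * c ^ 2 := by
      rw [show (4 : ℝ) = 2 ^ 2 by norm_num, ← pow_mul, mul_comm, pow_mul, hc]; ring
    have hsq : ∀ a : ℝ, a ^ 2 ^ (k + 1 + 1) = (a ^ 2 ^ (k + 1)) ^ 2 := fun a => by
      rw [pow_succ 2 (k + 1), pow_mul]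
    rw [hsq (u x)] at ih_sq ⊢
    rw [hsq ‖grad u x‖]
    linear_combination ih_sq + (u x ^ 2 ^ (k + 1)) ^ 2 / 4 * h4
      - (u x ^ 2 ^ (k + 1) * ‖grad u x‖ ^ 2 ^ (k + 1)) * hc

end Friedrichs

theorem stmt10 {n : ℕ} (Ω : Set (EuclideanSpace ℝ (Fin n))) (hΩ : IsOpen Ω)
    (m : ℕ) (hm : 1 ≤ m)
    (u φ : EuclideanSpace ℝ (Fin n) → ℝ)
    (hu : ContDiffOn ℝ 2 u Ω) (hφ : ContDiffOn ℝ 2 φ Ω)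
    (hφpos : ∀ x ∈ Ω, 0 < φ x) :
    ∀ x ∈ Ω,
      ‖grad u x‖ ^ (2 ^ m) +
        (lap φ x / φ x + (1 / 4) * ∑ j ∈ Finset.Icc 1 (m - 1), (4 : ℝ) ^ (2 ^ j)) *
          (u x) ^ (2 ^ m) =
      (∑ j ∈ Finset.Icc 1 (m - 1),
        (‖grad (fun y => (u y) ^ (2 ^ (m - j - 1))) x‖ ^ (2 ^ j) -
          2 ^ (2 ^ j - 1) * (u x) ^ (2 ^ (m - 1))) ^ 2) +
      ‖grad (fun y => (u y) ^ (2 ^ (m - 1))) x -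
        ((u x) ^ (2 ^ (m - 1)) / φ x) • grad φ x‖ ^ 2 +
      dvg (fun y => ((u y) ^ (2 ^ m) / φ y) • grad φ y) x := by
  intro x hx
  obtain ⟨k, rfl⟩ := Nat.exists_eq_add_of_le' hm
  have hφx : ContDiffAt ℝ 2 φ x := hφ.contDiffAt (hΩ.mem_nhds hx)
  have hux : DifferentiableAt ℝ u x :=
    (hu.contDiffAt (hΩ.mem_nhds hx)).differentiableAt two_ne_zero
  have hexp : ∀ j, k + 1 - j - 1 = k - j := fun j => by omega
  simpa only [Nat.add_sub_cancel, hexp] using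
    friedrichs_two_pow_succ (hφx.differentiableAt two_ne_zero) hφx.differentiableAt_grad
      (hφpos x hx).ne' k hux
end
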